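/- Let J ⊆ ℝ be an interval on which f ≠ 0 and W > 0. The rotational hypersurface is 2-minimal over J (i.e. 𝔠₂ = 0 at every point (u, v, w) with u ∈ J and cos w ≠ 0) if and only if φ'·(2f·(f'·φ'' − f''·φ') + φ'·(f'² + φ'²)) = 0 on J. -/

import Mathlib

open Real Matrix

noncomputable section

/-- A vector in Euclidean 4-space `𝔼⁴`. -/
def vec4 (a b c d : ℝ) : EuclideanSpace ℝ (Fin 4) :=
  (WithLp.equiv 2 (Fin 4 → ℝ)).symm ![a, b, c, d]

/-- Partial derivative in the `i`-th variable (`i = 0,1,2` for `u,v,w`)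
of a map `ℝ³ → 𝔼⁴`. -/
def pd : Fin 3 → (ℝ → ℝ → ℝ → EuclideanSpace ℝ (Fin 4)) →
    ℝ → ℝ → ℝ → EuclideanSpace ℝ (Fin 4)
  | 0, X, u, v, w => deriv (fun t => X t v w) u
  | 1, X, u, v, w => deriv (fun t => X u t w) v
  | 2, X, u, v, w => deriv (fun t => X u v t) w

/-- The rotational hypersurface in `𝔼⁴` generated by the profile curve
`u ↦ (f u, 0, 0, φ u)` rotated about the `x₄`-axis. -/
def rotHyp (f φ : ℝ → ℝ) (u v w : ℝ) : EuclideanSpace ℝ (Fin 4) :=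
  vec4 (f u * cos v * cos w) (f u * sin v * cos w) (f u * sin w) (φ u)

/-- The Gauss map `G = W^{-1/2}·(φ'·cos v·cos w, φ'·sin v·cos w, φ'·sin w, -f')`,
where `W = f'² + φ'²`. -/
def gaussMap (f φ : ℝ → ℝ) (u v w : ℝ) : EuclideanSpace ℝ (Fin 4) :=
  ((deriv f u ^ 2 + deriv φ u ^ 2) ^ (-(1 : ℝ) / 2)) •
    vec4 (deriv φ u * cos v * cos w) (deriv φ u * sin v * cos w)
      (deriv φ u * sin w) (-deriv f u)

/-- The first fundamental form matrix `I = (⟨∂ᵢx, ∂ⱼx⟩)ᵢⱼ`. -/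
def firstFF (f φ : ℝ → ℝ) (u v w : ℝ) : Matrix (Fin 3) (Fin 3) ℝ :=
  Matrix.of fun i j => (inner ℝ (pd i (rotHyp f φ) u v w) (pd j (rotHyp f φ) u v w) : ℝ)

/-- The second fundamental form matrix `II = (⟨∂ᵢ∂ⱼx, G⟩)ᵢⱼ`. -/
def secondFF (f φ : ℝ → ℝ) (u v w : ℝ) : Matrix (Fin 3) (Fin 3) ℝ :=
  Matrix.of fun i j => (inner ℝ (pd i (pd j (rotHyp f φ)) u v w) (gaussMap f φ u v w) : ℝ)

/-- The third fundamental form matrix `III = (⟨∂ᵢG, ∂ⱼG⟩)ᵢⱼ`. -/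
def thirdFF (f φ : ℝ → ℝ) (u v w : ℝ) : Matrix (Fin 3) (Fin 3) ℝ :=
  Matrix.of fun i j => (inner ℝ (pd i (gaussMap f φ) u v w) (pd j (gaussMap f φ) u v w) : ℝ)

/-- The shape operator matrix `S = I⁻¹ · II`. -/
def shapeOp (f φ : ℝ → ℝ) (u v w : ℝ) : Matrix (Fin 3) (Fin 3) ℝ :=
  (firstFF f φ u v w)⁻¹ * secondFF f φ u v w

/-- The fourth fundamental form matrix `IV = III · S`. -/
def fourthFF (f φ : ℝ → ℝ) (u v w : ℝ) : Matrix (Fin 3) (Fin 3) ℝ :=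
  thirdFF f φ u v w * shapeOp f φ u v w

lemma inner_vec4 (a b c d a' b' c' d' : ℝ) :
    (inner ℝ (vec4 a b c d) (vec4 a' b' c' d') : ℝ) = a*a' + b*b' + c*c' + d*d' := by
  simp [vec4, PiLp.inner_apply, Fin.sum_univ_four]; ring

lemma hasDerivAt_vec4 {a b c d : ℝ → ℝ} {a' b' c' d' : ℝ} {t : ℝ}
    (ha : HasDerivAt a a' t) (hb : HasDerivAt b b' t) (hc : HasDerivAt c c' t)
    (hd : HasDerivAt d d' t) :
    HasDerivAt (fun t => vec4 (a t) (b t) (c t) (d t)) (vec4 a' b' c' d') t := by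
  have h : HasDerivAt (fun t => (![a t, b t, c t, d t] : Fin 4 → ℝ)) ![a', b', c', d'] t := by
    rw [hasDerivAt_pi]
    intro i
    fin_cases i <;> simpa
  have := ((EuclideanSpace.equiv (Fin 4) ℝ).symm.toContinuousLinearMap.hasFDerivAt).comp_hasDerivAt t h
  exact this

lemma fin3_mk0 (h : 0 < 3) : (⟨0, h⟩ : Fin 3) = 0 := rfl
lemma fin3_mk1 (h : 1 < 3) : (⟨1, h⟩ : Fin 3) = 1 := rfl
lemma fin3_mk2 (h : 2 < 3) : (⟨2, h⟩ : Fin 3) = 2 := rfl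

section
variable {f φ : ℝ → ℝ}

lemma pd0_rot (hf : Differentiable ℝ f) (hφ : Differentiable ℝ φ) :
    pd 0 (rotHyp f φ) = fun u v w => vec4 (deriv f u * cos v * cos w)
      (deriv f u * sin v * cos w) (deriv f u * sin w) (deriv φ u) := by
  funext u v w
  show deriv (fun t => rotHyp f φ t v w) u = _
  exact (hasDerivAt_vec4 (((hf u).hasDerivAt.mul_const _).mul_const _)
    (((hf u).hasDerivAt.mul_const _).mul_const _) ((hf u).hasDerivAt.mul_const _)
    (hφ u).hasDerivAt).deriv

lemma pd1_rot : pd 1 (rotHyp f φ) = fun u v w => vec4 (f u * -sin v * cos w)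
    (f u * cos v * cos w) 0 0 := by
  funext u v w
  show deriv (fun t => rotHyp f φ u t w) v = _
  exact (hasDerivAt_vec4 (((hasDerivAt_cos v).const_mul (f u)).mul_const (cos w))
    (((hasDerivAt_sin v).const_mul (f u)).mul_const (cos w))
    (hasDerivAt_const _ _) (hasDerivAt_const _ _)).deriv

lemma pd2_rot : pd 2 (rotHyp f φ) = fun u v w => vec4 (f u * cos v * -sin w)
    (f u * sin v * -sin w) (f u * cos w) 0 := by
  funext u v w
  show deriv (fun t => rotHyp f φ u v t) w = _
  exact (hasDerivAt_vec4 ((hasDerivAt_cos w).const_mul (f u * cos v))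
    ((hasDerivAt_cos w).const_mul (f u * sin v))
    ((hasDerivAt_sin w).const_mul (f u)) (hasDerivAt_const _ _)).deriv

lemma firstFF_eq (hf : Differentiable ℝ f) (hφ : Differentiable ℝ φ) (u v w : ℝ) :
    firstFF f φ u v w = !![deriv f u ^ 2 + deriv φ u ^ 2, 0, 0;
      0, f u ^ 2 * cos w ^ 2, 0; 0, 0, f u ^ 2] := by
  ext i j
  fin_cases i <;> fin_cases j <;>
    (simp only [fin3_mk0, fin3_mk1, fin3_mk2, firstFF, Matrix.of_apply, pd0_rot hf hφ, pd1_rot, pd2_rot, inner_vec4];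
     norm_num [Matrix.cons_val_zero, Matrix.cons_val_one, Matrix.head_cons, Matrix.head_fin_const,
       Matrix.cons_val_two, Matrix.tail_cons, Matrix.vecHead, Matrix.vecTail] <;> (ring_nf; try simp only [sin_sq]; try ring))


variable {u v w : ℝ}

lemma pd00 (hf' : Differentiable ℝ (deriv f)) (hφ' : Differentiable ℝ (deriv φ))
    (hf : Differentiable ℝ f) (hφ : Differentiable ℝ φ) :
    pd 0 (pd 0 (rotHyp f φ)) u v w = vec4 (deriv (deriv f) u * cos v * cos w)
      (deriv (deriv f) u * sin v * cos w) (deriv (deriv f) u * sin w) (deriv (deriv φ) u) := by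
  rw [pd0_rot hf hφ]
  show deriv _ u = _
  exact (hasDerivAt_vec4 (((hf' u).hasDerivAt.mul_const _).mul_const _)
    (((hf' u).hasDerivAt.mul_const _).mul_const _) ((hf' u).hasDerivAt.mul_const _)
    (hφ' u).hasDerivAt).deriv

lemma pd01 (hf : Differentiable ℝ f) :
    pd 0 (pd 1 (rotHyp f φ)) u v w = vec4 (deriv f u * -sin v * cos w)
      (deriv f u * cos v * cos w) 0 0 := by
  rw [pd1_rot]
  show deriv _ u = _
  exact (hasDerivAt_vec4 (((hf u).hasDerivAt.mul_const _).mul_const _)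
    (((hf u).hasDerivAt.mul_const _).mul_const _) (hasDerivAt_const _ _)
    (hasDerivAt_const _ _)).deriv

lemma pd02 (hf : Differentiable ℝ f) :
    pd 0 (pd 2 (rotHyp f φ)) u v w = vec4 (deriv f u * cos v * -sin w)
      (deriv f u * sin v * -sin w) (deriv f u * cos w) 0 := by
  rw [pd2_rot]
  show deriv _ u = _
  exact (hasDerivAt_vec4 (((hf u).hasDerivAt.mul_const _).mul_const _)
    (((hf u).hasDerivAt.mul_const _).mul_const _) ((hf u).hasDerivAt.mul_const _)
    (hasDerivAt_const _ _)).deriv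

lemma pd10 (hf : Differentiable ℝ f) (hφ : Differentiable ℝ φ) :
    pd 1 (pd 0 (rotHyp f φ)) u v w = vec4 (deriv f u * -sin v * cos w)
      (deriv f u * cos v * cos w) 0 0 := by
  rw [pd0_rot hf hφ]
  show deriv _ v = _
  exact (hasDerivAt_vec4 (((hasDerivAt_cos v).const_mul _).mul_const _)
    (((hasDerivAt_sin v).const_mul _).mul_const _) (hasDerivAt_const _ _)
    (hasDerivAt_const _ _)).deriv

lemma pd11 : pd 1 (pd 1 (rotHyp f φ)) u v w = vec4 (f u * -cos v * cos w)
    (f u * -sin v * cos w) 0 0 := by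
  rw [pd1_rot]
  show deriv _ v = _
  exact (hasDerivAt_vec4 (((hasDerivAt_sin v).neg.const_mul _).mul_const _)
    (((hasDerivAt_cos v).const_mul _).mul_const _) (hasDerivAt_const _ _)
    (hasDerivAt_const _ _)).deriv

lemma pd12 : pd 1 (pd 2 (rotHyp f φ)) u v w = vec4 (f u * -sin v * -sin w)
    (f u * cos v * -sin w) 0 0 := by
  rw [pd2_rot]
  show deriv _ v = _
  exact (hasDerivAt_vec4 (((hasDerivAt_cos v).const_mul _).mul_const _)
    (((hasDerivAt_sin v).const_mul _).mul_const _) (hasDerivAt_const _ _)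
    (hasDerivAt_const _ _)).deriv

lemma pd20 (hf : Differentiable ℝ f) (hφ : Differentiable ℝ φ) :
    pd 2 (pd 0 (rotHyp f φ)) u v w = vec4 (deriv f u * cos v * -sin w)
      (deriv f u * sin v * -sin w) (deriv f u * cos w) 0 := by
  rw [pd0_rot hf hφ]
  show deriv _ w = _
  exact (hasDerivAt_vec4 ((hasDerivAt_cos w).const_mul _)
    ((hasDerivAt_cos w).const_mul _) ((hasDerivAt_sin w).const_mul _)
    (hasDerivAt_const _ _)).deriv

lemma pd21 : pd 2 (pd 1 (rotHyp f φ)) u v w = vec4 (f u * -sin v * -sin w)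
    (f u * cos v * -sin w) 0 0 := by
  rw [pd1_rot]
  show deriv _ w = _
  exact (hasDerivAt_vec4 ((hasDerivAt_cos w).const_mul _)
    ((hasDerivAt_cos w).const_mul _) (hasDerivAt_const _ _)
    (hasDerivAt_const _ _)).deriv

lemma pd22 : pd 2 (pd 2 (rotHyp f φ)) u v w = vec4 (f u * cos v * -cos w)
    (f u * sin v * -cos w) (f u * -sin w) 0 := by
  rw [pd2_rot]
  show deriv _ w = _
  exact (hasDerivAt_vec4 ((hasDerivAt_sin w).neg.const_mul _)
    ((hasDerivAt_sin w).neg.const_mul _) ((hasDerivAt_cos w).const_mul _)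
    (hasDerivAt_const _ _)).deriv

lemma secondFF_eq (hf : ContDiff ℝ (⊤ : ℕ∞) f) (hφ : ContDiff ℝ (⊤ : ℕ∞) φ) (u v w : ℝ) :
    secondFF f φ u v w = ((deriv f u ^ 2 + deriv φ u ^ 2) ^ (-(1:ℝ)/2)) •
      !![deriv (deriv f) u * deriv φ u - deriv f u * deriv (deriv φ) u, 0, 0;
         0, -(f u * deriv φ u * cos w ^ 2), 0;
         0, 0, -(f u * deriv φ u)] := by
  have hfd : Differentiable ℝ f := hf.differentiable (by simp)
  have hφd : Differentiable ℝ φ := hφ.differentiable (by simp)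
  have hfd' : Differentiable ℝ (deriv f) :=
    (contDiff_infty_iff_deriv.mp (hf.of_le (by simp))).2.differentiable (by simp)
  have hφd' : Differentiable ℝ (deriv φ) :=
    (contDiff_infty_iff_deriv.mp (hφ.of_le (by simp))).2.differentiable (by simp)
  ext i j
  fin_cases i <;> fin_cases j <;>
    (simp only [fin3_mk0, fin3_mk1, fin3_mk2, secondFF, Matrix.of_apply, gaussMap,
       pd00 hfd' hφd' hfd hφd, pd01 hfd, pd02 hfd, pd10 hfd hφd, pd11, pd12,
       pd20 hfd hφd, pd21, pd22, real_inner_smul_right, inner_vec4, Matrix.smul_apply,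
       smul_eq_mul];
     norm_num [Matrix.cons_val_zero, Matrix.cons_val_one, Matrix.head_cons, Matrix.head_fin_const,
       Matrix.cons_val_two, Matrix.tail_cons, Matrix.vecHead, Matrix.vecTail];
     try tauto;
     ring_nf;
     try simp only [sin_sq];
     try ring;
     try tauto)

end


section
variable {f φ : ℝ → ℝ}

lemma shapeOp_eq (hf : ContDiff ℝ (⊤ : ℕ∞) f) (hφ : ContDiff ℝ (⊤ : ℕ∞) φ) (u v w : ℝ)
    (hf0 : f u ≠ 0) (hW : 0 < deriv f u ^ 2 + deriv φ u ^ 2) (hw : cos w ≠ 0) :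
    shapeOp f φ u v w =
      !![(deriv f u ^ 2 + deriv φ u ^ 2) ^ (-(1:ℝ)/2) *
           (deriv (deriv f) u * deriv φ u - deriv f u * deriv (deriv φ) u) *
           (deriv f u ^ 2 + deriv φ u ^ 2)⁻¹, 0, 0;
         0, -((deriv f u ^ 2 + deriv φ u ^ 2) ^ (-(1:ℝ)/2) * deriv φ u * (f u)⁻¹), 0;
         0, 0, -((deriv f u ^ 2 + deriv φ u ^ 2) ^ (-(1:ℝ)/2) * deriv φ u * (f u)⁻¹)] := by
  have hfd : Differentiable ℝ f := hf.differentiable (by simp)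
  have hφd : Differentiable ℝ φ := hφ.differentiable (by simp)
  have hinv : (firstFF f φ u v w)⁻¹ =
      !![(deriv f u ^ 2 + deriv φ u ^ 2)⁻¹, 0, 0;
         0, (f u ^ 2 * cos w ^ 2)⁻¹, 0; 0, 0, (f u ^ 2)⁻¹] := by
    apply Matrix.inv_eq_right_inv
    rw [firstFF_eq hfd hφd]
    ext i j
    fin_cases i <;> fin_cases j <;>
      (simp [Matrix.mul_apply, Fin.sum_univ_three, Matrix.one_apply, Matrix.vecHead,
        Matrix.vecTail]; try field_simp; try ring; try tauto)
  rw [shapeOp, hinv, secondFF_eq hf hφ, Matrix.mul_smul]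
  ext i j
  fin_cases i <;> fin_cases j <;>
    (simp [Matrix.mul_apply, Fin.sum_univ_three, Matrix.smul_apply, smul_eq_mul,
      Matrix.vecHead, Matrix.vecTail]; try field_simp; try ring; try tauto)
end

section
variable {f φ : ℝ → ℝ}

lemma ralg (t F F' F'' P' P'' W c : ℝ) (hF : F ≠ 0) (hW : W ≠ 0) (ht : t ^ 2 = W⁻¹)
    (hc : c = ((-(t * P' * F⁻¹)) ^ 2
      + 2 * (t * (F'' * P' - F' * P'') * W⁻¹) * (-(t * P' * F⁻¹))) / 3) :
    c * (3 * F ^ 2 * W ^ 2) = P' * (2 * F * (F' * P'' - F'' * P') + P' * W) := by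
  rw [hc]
  ring_nf
  simp only [ht]
  field_simp


/-- Let `J` be an interval on which `f ≠ 0` and `W = f'² + φ'² > 0`,
and let the curvature functions `c₁, c₂, c₃` be defined by the characteristic
polynomial identity.  The rotational hypersurface is 2-minimal over `J`
(`c₂ = 0` at every point `(u,v,w)` with `u ∈ J` and `cos w ≠ 0`) iff
`φ'·(2f·(f'·φ'' - f''·φ') + φ'·(f'² + φ'²)) = 0` on `J`. -/
theorem rotHyp_two_minimal_iff (f φ : ℝ → ℝ) (hf : ContDiff ℝ (⊤ : ℕ∞) f) (hφ : ContDiff ℝ (⊤ : ℕ∞) φ)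
    (J : Set ℝ) (hJ : J.OrdConnected)
    (hfu : ∀ u ∈ J, f u ≠ 0) (hW : ∀ u ∈ J, 0 < deriv f u ^ 2 + deriv φ u ^ 2)
    (c₁ c₂ c₃ : ℝ → ℝ → ℝ → ℝ)
    (hchar : ∀ u v w lam : ℝ,
      (shapeOp f φ u v w - lam • (1 : Matrix (Fin 3) (Fin 3) ℝ)).det
        = -lam ^ 3 + 3 * c₁ u v w * lam ^ 2 - 3 * c₂ u v w * lam + c₃ u v w) :
    (∀ u ∈ J, ∀ v w : ℝ, cos w ≠ 0 → c₂ u v w = 0) ↔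
      (∀ u ∈ J,
        deriv φ u *
          (2 * f u * (deriv f u * deriv (deriv φ) u - deriv (deriv f) u * deriv φ u)
            + deriv φ u * (deriv f u ^ 2 + deriv φ u ^ 2)) = 0) := by
  have key : ∀ u ∈ J, ∀ v w : ℝ, cos w ≠ 0 →
      c₂ u v w * (3 * f u ^ 2 * (deriv f u ^ 2 + deriv φ u ^ 2) ^ 2) =
        deriv φ u *
          (2 * f u * (deriv f u * deriv (deriv φ) u - deriv (deriv f) u * deriv φ u)
            + deriv φ u * (deriv f u ^ 2 + deriv φ u ^ 2)) := by
    intro u hu v w hw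
    have hf0 := hfu u hu
    have hW0 := hW u hu
    have hS := shapeOp_eq hf hφ u v w hf0 hW0 hw
    have hdet : ∀ lam : ℝ,
        (shapeOp f φ u v w - lam • (1 : Matrix (Fin 3) (Fin 3) ℝ)).det
          = ((deriv f u ^ 2 + deriv φ u ^ 2) ^ (-(1:ℝ)/2) *
              (deriv (deriv f) u * deriv φ u - deriv f u * deriv (deriv φ) u) *
              (deriv f u ^ 2 + deriv φ u ^ 2)⁻¹ - lam) *
            (-((deriv f u ^ 2 + deriv φ u ^ 2) ^ (-(1:ℝ)/2) * deriv φ u * (f u)⁻¹) - lam) ^ 2 := by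
      intro lam
      rw [hS]
      simp [Matrix.det_fin_three, Matrix.sub_apply, Matrix.smul_apply, Matrix.one_apply]
      ring
    have h1 := (hdet 1).symm.trans (hchar u v w 1)
    have h2 := (hdet (-1)).symm.trans (hchar u v w (-1))
    have hs2 : ((deriv f u ^ 2 + deriv φ u ^ 2) ^ (-(1:ℝ)/2)) ^ 2
        = (deriv f u ^ 2 + deriv φ u ^ 2)⁻¹ := by
      rw [← Real.rpow_natCast ((deriv f u ^ 2 + deriv φ u ^ 2) ^ (-(1:ℝ)/2)) 2,
        ← Real.rpow_mul hW0.le]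
      norm_num [Real.rpow_neg_one]
    refine ralg ((deriv f u ^ 2 + deriv φ u ^ 2) ^ (-(1:ℝ)/2)) (f u) (deriv f u)
      (deriv (deriv f) u) (deriv φ u) (deriv (deriv φ) u)
      (deriv f u ^ 2 + deriv φ u ^ 2) _ hf0 (ne_of_gt hW0) hs2 ?_
    linear_combination (h1 - h2) / 6
  constructor
  · intro h u hu
    have hk := key u hu 0 0 (by norm_num)
    rw [h u hu 0 0 (by norm_num)] at hk
    linarith [hk]
  · intro h u hu v w hw
    have hk := key u hu v w hw
    rw [h u hu] at hk
    have hf0 := hfu u hu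
    have hW0 := hW u hu
    have hden : 3 * f u ^ 2 * (deriv f u ^ 2 + deriv φ u ^ 2) ^ 2 ≠ 0 := by positivity
    exact (mul_eq_zero.mp hk).resolve_right hden
end
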